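/- The extended crystal B̂(∞), viewed as an (I × ℤ)-colored graph with edges b → F_{i,k}(b), is connected: every element of B̂(∞) is joined to the highest weight element 1̂ = (v)_{k∈ℤ} by a finite sequence of applications of the operators F_{i,k} and E_{i,k}. -/

import Mathlib

/-- An abstract model of the crystal `B(∞)` of the negative half of a quantum group,
recording the Kashiwara operators `f̃ᵢ, ẽᵢ`, their starred versions, the statistics
`εᵢ, εᵢ*`, the weight function (in simple-root coordinates) and the Cartan matrix,
together with the standard crystal identities. -/
structure InfCrystal (I : Type*) where
  B : Type*
  A : I → I → ℤ
  hv : B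
  f : I → B → B
  e : I → B → B
  fs : I → B → B
  es : I → B → B
  eps : I → B → ℕ
  epss : I → B → ℕ
  wt : B → I →₀ ℤ
  eps_hv : ∀ i, eps i hv = 0
  epss_hv : ∀ i, epss i hv = 0
  wt_hv : wt hv = 0
  e_f : ∀ i b, e i (f i b) = b
  f_e : ∀ i b, 0 < eps i b → f i (e i b) = b
  eps_f : ∀ i b, eps i (f i b) = eps i b + 1
  eps_e : ∀ i b, 0 < eps i b → eps i (e i b) = eps i b - 1
  es_fs : ∀ i b, es i (fs i b) = b
  fs_es : ∀ i b, 0 < epss i b → fs i (es i b) = b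
  epss_fs : ∀ i b, epss i (fs i b) = epss i b + 1
  epss_es : ∀ i b, 0 < epss i b → epss i (es i b) = epss i b - 1
  wt_f : ∀ i b, wt (f i b) = wt b - Finsupp.single i 1
  wt_fs : ∀ i b, wt (fs i b) = wt b - Finsupp.single i 1
  wt_e : ∀ i b, 0 < eps i b → wt (e i b) = wt b + Finsupp.single i 1
  wt_es : ∀ i b, 0 < epss i b → wt (es i b) = wt b + Finsupp.single i 1

namespace InfCrystal

variable {I : Type*} (C : InfCrystal I)

/-- The pairing `⟨hᵢ, λ⟩` computed from the Cartan matrix. -/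
def pair (i : I) (l : I →₀ ℤ) : ℤ := l.sum fun j c => C.A i j * c

/-- The underlying set of the extended crystal `B̂(∞)`:
sequences indexed by `ℤ`, equal to the highest weight vector almost everywhere. -/
def Hat := {b : ℤ → C.B // {k | b k ≠ C.hv}.Finite}

/-- The highest weight element `1̂` of the extended crystal. -/
def one : C.Hat := ⟨fun _ => C.hv, by simp⟩

/-- The shift `D^p` on the extended crystal. -/
def shift (p : ℤ) (b : C.Hat) : C.Hat :=
  ⟨fun k => b.1 (k - p), by
    refine (b.2.image (· + p)).subset ?_
    intro k hk
    exact ⟨k - p, hk, by ring⟩⟩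

/-- `ε̂_{i,k}`. -/
def ehat (i : I) (k : ℤ) (b : C.Hat) : ℤ :=
  (C.eps i (b.1 k) : ℤ) - (C.epss i (b.1 (k + 1)) : ℤ)

/-- Update one component of an extended crystal element. -/
def update (b : C.Hat) (k : ℤ) (x : C.B) : C.Hat :=
  ⟨Function.update b.1 k x, by
    refine (b.2.insert k).subset ?_
    intro j hj
    rcases eq_or_ne j k with h | h
    · exact Set.mem_insert_iff.mpr (Or.inl h)
    · exact Set.mem_insert_iff.mpr (Or.inr (by simpa [Function.update_of_ne h] using hj))⟩

/-- The extended crystal operator `F_{i,k}`. -/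
def Fop (i : I) (k : ℤ) (b : C.Hat) : C.Hat :=
  if 0 ≤ C.ehat i k b then C.update b k (C.f i (b.1 k))
  else C.update b (k + 1) (C.es i (b.1 (k + 1)))

/-- The extended crystal operator `E_{i,k}`. -/
def Eop (i : I) (k : ℤ) (b : C.Hat) : C.Hat :=
  if 0 < C.ehat i k b then C.update b k (C.e i (b.1 k))
  else C.update b (k + 1) (C.fs i (b.1 (k + 1)))

/-- `ẽᵢ^{max}`. -/
def emax (i : I) (b : C.B) : C.B := (C.e i)^[C.eps i b] b

/-- `(ẽᵢ*)^{max}`. -/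
def esmax (i : I) (b : C.B) : C.B := (C.es i)^[C.epss i b] b

/-- The Saito crystal reflection `Tᵢ(b) = f̃ᵢ^{φᵢ*(b)} (ẽᵢ*)^{εᵢ*(b)}(b)`
(meant for `b` with `εᵢ(b) = 0`). -/
def saitoT (i : I) (b : C.B) : C.B :=
  (C.f i)^[((C.epss i b : ℤ) + C.pair i (C.wt b)).toNat] ((C.es i)^[C.epss i b] b)

/-- The inverse Saito crystal reflection `Tᵢ*(b) = (f̃ᵢ*)^{φᵢ(b)} ẽᵢ^{εᵢ(b)}(b)`. -/
def saitoTs (i : I) (b : C.B) : C.B :=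
  (C.fs i)^[((C.eps i b : ℤ) + C.pair i (C.wt b)).toNat] ((C.e i)^[C.eps i b] b)

/-- `T̃ᵢ = Tᵢ ∘ ẽᵢ^{max}`. -/
def tT (i : I) (b : C.B) : C.B := C.saitoT i (C.emax i b)

/-- `T̃ᵢ* = Tᵢ* ∘ (ẽᵢ*)^{max}`. -/
def tTs (i : I) (b : C.B) : C.B := C.saitoTs i (C.esmax i b)

lemma tT_hv (i : I) : C.tT i C.hv = C.hv := by
  simp [tT, emax, saitoT, pair, C.eps_hv, C.epss_hv, C.wt_hv]

lemma tTs_hv (i : I) : C.tTs i C.hv = C.hv := by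
  simp [tTs, esmax, saitoTs, pair, C.eps_hv, C.epss_hv, C.wt_hv]

/-- The braid group operator `Rᵢ` on the extended crystal:
`Rᵢ(b)ₖ = (f̃ᵢ*)^{εᵢ(b_{k-1})}(T̃ᵢ(bₖ))`. -/
def Rop (i : I) (b : C.Hat) : C.Hat :=
  ⟨fun k => (C.fs i)^[C.eps i (b.1 (k - 1))] (C.tT i (b.1 k)), by
    refine (b.2.union (b.2.image (· + 1))).subset ?_
    intro k hk
    by_cases h1 : b.1 k = C.hv
    · by_cases h2 : b.1 (k - 1) = C.hv
      · exact absurd (by simp [h1, h2, C.eps_hv, C.tT_hv]) hk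
      · exact Or.inr ⟨k - 1, h2, by ring⟩
    · exact Or.inl h1⟩

/-- The braid group operator `Rᵢ*` on the extended crystal:
`Rᵢ*(b)ₖ = f̃ᵢ^{εᵢ*(b_{k+1})}(T̃ᵢ*(bₖ))`. -/
def Rops (i : I) (b : C.Hat) : C.Hat :=
  ⟨fun k => (C.f i)^[C.epss i (b.1 (k + 1))] (C.tTs i (b.1 k)), by
    refine (b.2.union (b.2.image (· - 1))).subset ?_
    intro k hk
    by_cases h1 : b.1 k = C.hv
    · by_cases h2 : b.1 (k + 1) = C.hv
      · exact absurd (by simp [h1, h2, C.epss_hv, C.tTs_hv]) hk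
      · exact Or.inr ⟨k + 1, h2, by ring⟩
    · exact Or.inl h1⟩

/-- The weight `ĥwt(b) = Σₖ (-1)ᵏ wt(bₖ)` of an extended crystal element. -/
noncomputable def hwt (b : C.Hat) : I →₀ ℤ :=
  ∑ᶠ k : ℤ, (((-1 : ℤˣ) ^ k : ℤˣ) : ℤ) • C.wt (b.1 k)

/-- The simple reflection `sᵢ(λ) = λ - ⟨hᵢ, λ⟩ αᵢ` on the root lattice. -/
noncomputable def sref (i : I) (l : I →₀ ℤ) : I →₀ ℤ := l - Finsupp.single i (C.pair i l)

/-- Componentwise application of a crystal map to an extended crystal element. -/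
def mapHat (z : C.B → C.B) (hz : z C.hv = C.hv) (b : C.Hat) : C.Hat :=
  ⟨fun k => z (b.1 k), by
    refine b.2.subset ?_
    intro k hk
    simp only [Set.mem_setOf_eq] at hk ⊢
    exact fun h => hk (by rw [h, hz])⟩

/-- The element of the extended crystal concentrated at position `k` with value `x`. -/
def unitSeq (k : ℤ) (x : C.B) : C.Hat := C.update C.one k x

/-- Composite `R_{i₁} R_{i₂} ⋯ R_{i_t}`. -/
def Rcomp (l : List I) : C.Hat → C.Hat := l.foldr (fun i g => C.Rop i ∘ g) id

/-- Composite `R*_{i₁} R*_{i₂} ⋯ R*_{i_t}`. -/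
def Rscomp (l : List I) : C.Hat → C.Hat := l.foldr (fun i g => C.Rops i ∘ g) id

end InfCrystal

/-- `m(i,j)` determined by the product `a_{ij} a_{ji}` of Cartan matrix entries. -/
def braidM (x : ℤ) : ℕ :=
  if x = 0 then 2 else if x = 1 then 3 else if x = 2 then 4 else 6

/-- The alternating word `(i, j, i, j, …)` of length `n`. -/
def altWord {I : Type*} (i j : I) : ℕ → List I
  | 0 => []
  | n + 1 => i :: altWord j i n

/-!
Fill in the positions where `b` differs from `v`, from the top down. If every position above `k` holds `v`,
then `ε̂_{i,k} = εᵢ(bₖ) ≥ 0`, so `F_{i,k}` acts as `f̃ᵢ` on the `k`-th component alone; since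
every element of `B(∞)` is a word in the `f̃ᵢ` applied to `v`, the component `bₖ` can be built
from `v` without disturbing the other positions.
-/

namespace InfCrystal

variable {I : Type*} (C : InfCrystal I)

def Adj (x y : C.Hat) : Prop := ∃ (i : I) (k : ℤ), y = C.Fop i k x ∨ y = C.Eop i k x

lemma update_apply_self (b : C.Hat) (k : ℤ) (x : C.B) : (C.update b k x).1 k = x :=
  Function.update_self (β := fun _ => C.B) k x b.1

lemma update_apply_of_ne (b : C.Hat) {k j : ℤ} (x : C.B) (h : j ≠ k) :
    (C.update b k x).1 j = b.1 j :=
  Function.update_of_ne (β := fun _ => C.B) h x b.1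

lemma update_eq_self (b : C.Hat) (k : ℤ) : C.update b k (b.1 k) = b :=
  Subtype.ext (Function.update_eq_self k b.1)

lemma update_update_self (b : C.Hat) (k : ℤ) (x y : C.B) :
    C.update (C.update b k x) k y = C.update b k y :=
  Subtype.ext (Function.update_idem (β := fun _ => C.B) x y b.1)

lemma eq_one_of_forall_eq_hv (b : C.Hat) (h : ∀ k, b.1 k = C.hv) : b = C.one :=
  Subtype.ext (funext h)

lemma Fop_of_succ_eq_hv (i : I) {k : ℤ} (b : C.Hat) (h : b.1 (k + 1) = C.hv) :
    C.Fop i k b = C.update b k (C.f i (b.1 k)) :=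
  if_pos (by simp [ehat, h, C.epss_hv])

lemma reflTransGen_update_foldr_f (l : List I) (b : C.Hat) {k : ℤ} (h : b.1 (k + 1) = C.hv) :
    Relation.ReflTransGen C.Adj b (C.update b k (l.foldr C.f (b.1 k))) := by
  induction l with
  | nil => rw [List.foldr_nil, C.update_eq_self]
  | cons i l ih =>
    refine ih.tail ⟨i, k, Or.inl ?_⟩
    have h' : (C.update b k (l.foldr C.f (b.1 k))).1 (k + 1) = C.hv := by
      rw [C.update_apply_of_ne _ _ (by omega), h]
    rw [C.Fop_of_succ_eq_hv i _ h', C.update_apply_self, C.update_update_self, List.foldr_cons]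

lemma reflTransGen_update_of_eq_hv (hgen : ∀ x : C.B, ∃ l : List I, x = l.foldr C.f C.hv)
    (b : C.Hat) {k : ℤ} (hk : b.1 k = C.hv) (h : b.1 (k + 1) = C.hv) (x : C.B) :
    Relation.ReflTransGen C.Adj b (C.update b k x) := by
  obtain ⟨l, rfl⟩ := hgen x
  simpa only [hk] using C.reflTransGen_update_foldr_f l b h

lemma reflTransGen_one_of_forall_notMem_eq_hv
    (hgen : ∀ x : C.B, ∃ l : List I, x = l.foldr C.f C.hv) (s : Finset ℤ) :
    ∀ b : C.Hat, (∀ k ∉ s, b.1 k = C.hv) → Relation.ReflTransGen C.Adj C.one b := by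
  induction s using Finset.induction_on_max with
  | empty =>
    intro b hb
    rw [C.eq_one_of_forall_eq_hv b fun k => hb k (Finset.notMem_empty k)]
  | insert a s hlt ih =>
    intro b hb
    set b' := C.update b a C.hv
    have hb' : ∀ k ∉ s, b'.1 k = C.hv := by
      intro k hk
      rcases eq_or_ne k a with rfl | hne
      · exact C.update_apply_self b k C.hv
      · rw [C.update_apply_of_ne b _ hne]
        exact hb k (by simp [hne, hk])
    have hsucc : b'.1 (a + 1) = C.hv := by
      rw [C.update_apply_of_ne b _ (by omega)]
      exact hb _ fun hmem => by
        rcases Finset.mem_insert.mp hmem with h | h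
        · omega
        · exact absurd (hlt _ h) (by omega)
    have hb'b : C.update b' a (b.1 a) = b := by
      rw [C.update_update_self, C.update_eq_self]
    exact (ih b' hb').trans
      (hb'b ▸ C.reflTransGen_update_of_eq_hv hgen b' (C.update_apply_self b a C.hv) hsucc _)

end InfCrystal

/-- The extended crystal `B̂(∞)` is connected as an `(I × ℤ)`-colored graph: assuming
(as holds in `B(∞)`) that every element of `B(∞)` is obtained from the highest weight
vector by applying finitely many `f̃ᵢ`'s, every element of `B̂(∞)` is joined to
`1̂ = (v)ₖ` by a finite sequence of applications of the operators `F_{i,k}`, `E_{i,k}`. -/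
theorem hat_connected {I : Type*} (C : InfCrystal I)
    (hgen : ∀ x : C.B, ∃ l : List I, x = l.foldr C.f C.hv) :
    ∀ b : C.Hat,
      Relation.ReflTransGen
        (fun x y : C.Hat => ∃ (i : I) (k : ℤ), y = C.Fop i k x ∨ y = C.Eop i k x)
        C.one b :=
  fun b => C.reflTransGen_one_of_forall_notMem_eq_hv hgen b.2.toFinset b fun k hk => by
    simpa using hk
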